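/- Let 𝓟 be a finite nonempty class of transitions and 𝓡 a finite nonempty class of mean-reward functions over a finite policy class Π, and let 𝓜 = 𝓟 × 𝓡. Then for every γ > 0 and every μ̄ ∈ Δ(𝓟), rfdec_γ(𝓜, μ̄) ≤ 2 · rrec_{γ/2}(𝓜, μ̄). -/
import Mathlib


open MeasureTheory ProbabilityTheory

noncomputable section

/-- Squared Hellinger distance between two measures, computed with respect to the
(dominating) measure `P + Q`. -/
def hellingerSq {Ω : Type*} [MeasurableSpace Ω] (P Q : Measure Ω) : ℝ :=
  ∫ x, (Real.sqrt ((P.rnDeriv (P + Q) x).toReal)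
      - Real.sqrt ((Q.rnDeriv (P + Q) x).toReal)) ^ 2 ∂(P + Q)

/-- The set `Δ(ι)` of probability distributions on a finite set `ι`. -/
def ProbDist (ι : Type*) [Fintype ι] : Type _ :=
  {p : ι → ℝ // (∀ i, 0 ≤ p i) ∧ ∑ i, p i = 1}

variable {O : Type*} [MeasurableSpace O] {H : ℕ} {Pol : Type*} [Fintype Pol]
  {ιP : Type*} [Fintype ιP] {ιR : Type*} [Fintype ιR]

/-- The value `f^{P,R}(π)` of policy `π` in the model with transition `Trans p` and mean
reward `Rew r`. -/
def fval (Trans : ιP → Pol → Measure O) (Rew : ιR → O → Fin H → ℝ)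
    (p : ιP) (r : ιR) (π : Pol) : ℝ :=
  ∫ o, (∑ h, Rew r o h) ∂(Trans p π)

/-- The Reward-Free Decision-Estimation Coefficient `rfdec_γ(𝓜, μ̄)` of the class
`𝓜 = 𝓟 × 𝓡` with respect to `μ̄ ∈ Δ(𝓟)`; `πopt p r` denotes the optimal policy
`π_{P,R}`. -/
def rfdec (γ : ℝ) (Trans : ιP → Pol → Measure O) (Rew : ιR → O → Fin H → ℝ)
    (πopt : ιP → ιR → Pol) (μbar : ProbDist ιP) : ℝ :=
  ⨅ pexp : ProbDist Pol, ⨆ r : ιR, ⨅ pout : ProbDist Pol, ⨆ p : ιP,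
    (∑ π, pout.1 π * (fval Trans Rew p r (πopt p r) - fval Trans Rew p r π))
      - γ * ∑ π, pexp.1 π * ∑ q, μbar.1 q * hellingerSq (Trans p π) (Trans q π)

/-- The auxiliary coefficient `rrec_γ(𝓜, μ̄)`. -/
def rrec (γ : ℝ) (Trans : ιP → Pol → Measure O) (Rew : ιR → O → Fin H → ℝ)
    (μbar : ProbDist ιP) : ℝ :=
  ⨅ pe : ProbDist Pol × ProbDist ιP, ⨆ x : ιP × ιR × Pol,
    |∑ q, pe.2.1 q * (fval Trans Rew x.1 x.2.1 x.2.2 - fval Trans Rew q x.2.1 x.2.2)|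
      - γ * ∑ q, μbar.1 q * ∑ π, pe.1.1 π * hellingerSq (Trans x.1 π) (Trans q π)

lemma hellingerSq_le_two {Ω : Type*} [MeasurableSpace Ω] (P Q : Measure Ω)
    [IsProbabilityMeasure P] [IsProbabilityMeasure Q] : hellingerSq P Q ≤ 2 := by
  have hP : Integrable (fun x => (P.rnDeriv (P+Q) x).toReal) (P+Q) :=
    Measure.integrable_toReal_rnDeriv
  have hQ : Integrable (fun x => (Q.rnDeriv (P+Q) x).toReal) (P+Q) :=
    Measure.integrable_toReal_rnDeriv
  have h1 : hellingerSq P Q ≤ ∫ x, ((P.rnDeriv (P+Q) x).toReal + (Q.rnDeriv (P+Q) x).toReal) ∂(P+Q) := by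
    refine integral_mono_of_nonneg (Filter.Eventually.of_forall fun x => sq_nonneg _) (hP.add hQ)
      (Filter.Eventually.of_forall fun x => ?_)
    have ha : (0:ℝ) ≤ (P.rnDeriv (P+Q) x).toReal := ENNReal.toReal_nonneg
    have hb : (0:ℝ) ≤ (Q.rnDeriv (P+Q) x).toReal := ENNReal.toReal_nonneg
    show (Real.sqrt ((P.rnDeriv (P+Q) x).toReal) - Real.sqrt ((Q.rnDeriv (P+Q) x).toReal)) ^ 2
      ≤ (P.rnDeriv (P+Q) x).toReal + (Q.rnDeriv (P+Q) x).toReal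
    nlinarith [Real.sq_sqrt ha, Real.sq_sqrt hb,
      mul_nonneg (Real.sqrt_nonneg ((P.rnDeriv (P+Q) x).toReal)) (Real.sqrt_nonneg ((Q.rnDeriv (P+Q) x).toReal))]
  have hPac : P ≪ P + Q := Measure.absolutelyContinuous_of_le (Measure.le_add_right le_rfl)
  have hQac : Q ≪ P + Q := Measure.absolutelyContinuous_of_le (Measure.le_add_left le_rfl)
  rw [integral_add hP hQ, Measure.integral_toReal_rnDeriv hPac,
    Measure.integral_toReal_rnDeriv hQac] at h1
  norm_num at h1
  exact h1

instance ProbDist.instNonempty {ι : Type*} [Fintype ι] [Nonempty ι] : Nonempty (ProbDist ι) :=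
  ⟨⟨fun _ => (Fintype.card ι : ℝ)⁻¹, fun _ => by positivity, by
    rw [Finset.sum_const, Finset.card_univ, nsmul_eq_mul]
    exact mul_inv_cancel₀ (by exact_mod_cast Fintype.card_ne_zero)⟩⟩

/-- Proposition (rfec-to-upper): the Reward-Free DEC is bounded by twice the auxiliary
coefficient `rrec` at parameter `γ/2`. -/
theorem rfdec_le_two_mul_rrec
    [Nonempty Pol] [Nonempty ιP] [Nonempty ιR] (hH : 1 ≤ H)
    (Trans : ιP → Pol → Measure O)
    (hTrans : ∀ p π, IsProbabilityMeasure (Trans p π))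
    (Rew : ιR → O → Fin H → ℝ)
    (hRewMeas : ∀ r h, Measurable fun o => Rew r o h)
    (hRew_nonneg : ∀ r o h, 0 ≤ Rew r o h)
    (hRew_le_one : ∀ r o h, Rew r o h ≤ 1)
    (hRew_sum : ∀ r o, ∑ h, Rew r o h ≤ 1)
    (πopt : ιP → ιR → Pol)
    (hπopt : ∀ p r π, fval Trans Rew p r π ≤ fval Trans Rew p r (πopt p r))
    (γ : ℝ) (hγ : 0 < γ) (μbar : ProbDist ιP) :
    rfdec γ Trans Rew πopt μbar ≤ 2 * rrec (γ / 2) Trans Rew μbar := by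
  classical
  have hhel : ∀ p q π, hellingerSq (Trans p π) (Trans q π) ≤ 2 := fun p q π => by
    have := hTrans p π; have := hTrans q π
    exact hellingerSq_le_two _ _
  -- weighted hellinger sums are at most 2
  have hDP : ∀ (pp : ProbDist Pol) (P : ιP),
      ∑ π, pp.1 π * ∑ q, μbar.1 q * hellingerSq (Trans P π) (Trans q π) ≤ 2 := by
    intro pp P
    calc ∑ π, pp.1 π * ∑ q, μbar.1 q * hellingerSq (Trans P π) (Trans q π)
        ≤ ∑ π, pp.1 π * 2 := by
          refine Finset.sum_le_sum fun π _ => mul_le_mul_of_nonneg_left ?_ (pp.2.1 π)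
          calc ∑ q, μbar.1 q * hellingerSq (Trans P π) (Trans q π)
              ≤ ∑ q, μbar.1 q * 2 :=
                Finset.sum_le_sum fun q _ => mul_le_mul_of_nonneg_left (hhel P q π) (μbar.2.1 q)
            _ = 2 := by rw [← Finset.sum_mul, μbar.2.2, one_mul]
      _ = 2 := by rw [← Finset.sum_mul, pp.2.2, one_mul]
  have hDQ : ∀ (pp : ProbDist Pol) (P : ιP),
      ∑ q, μbar.1 q * ∑ π, pp.1 π * hellingerSq (Trans P π) (Trans q π) ≤ 2 := by
    intro pp P
    calc ∑ q, μbar.1 q * ∑ π, pp.1 π * hellingerSq (Trans P π) (Trans q π)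
        ≤ ∑ q, μbar.1 q * 2 := by
          refine Finset.sum_le_sum fun q _ => mul_le_mul_of_nonneg_left ?_ (μbar.2.1 q)
          calc ∑ π, pp.1 π * hellingerSq (Trans P π) (Trans q π)
              ≤ ∑ π, pp.1 π * 2 :=
                Finset.sum_le_sum fun π _ => mul_le_mul_of_nonneg_left (hhel P q π) (pp.2.1 π)
            _ = 2 := by rw [← Finset.sum_mul, pp.2.2, one_mul]
      _ = 2 := by rw [← Finset.sum_mul, μbar.2.2, one_mul]
  -- the inner rfdec term is bounded below by -2γ
  have hTlb : ∀ (pexp pout : ProbDist Pol) (r : ιR) (P : ιP),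
      -(2*γ) ≤ (∑ π, pout.1 π * (fval Trans Rew P r (πopt P r) - fval Trans Rew P r π))
        - γ * ∑ π, pexp.1 π * ∑ q, μbar.1 q * hellingerSq (Trans P π) (Trans q π) := by
    intro pexp pout r P
    have h1 : (0:ℝ) ≤ ∑ π, pout.1 π * (fval Trans Rew P r (πopt P r) - fval Trans Rew P r π) :=
      Finset.sum_nonneg fun π _ => mul_nonneg (pout.2.1 π) (by linarith [hπopt P r π])
    have h2 := hDP pexp P
    nlinarith
  have hBddP : ∀ (pexp : ProbDist Pol) (pout : ProbDist Pol) (r : ιR),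
      BddAbove (Set.range fun p : ιP =>
        (∑ π, pout.1 π * (fval Trans Rew p r (πopt p r) - fval Trans Rew p r π))
          - γ * ∑ π, pexp.1 π * ∑ q, μbar.1 q * hellingerSq (Trans p π) (Trans q π)) :=
    fun _ _ _ => Set.Finite.bddAbove (Set.finite_range _)
  -- lower bound on F pexp
  have hFlb : ∀ pexp : ProbDist Pol, -(2*γ) ≤ ⨆ r : ιR, ⨅ pout : ProbDist Pol, ⨆ p : ιP,
      (∑ π, pout.1 π * (fval Trans Rew p r (πopt p r) - fval Trans Rew p r π))
        - γ * ∑ π, pexp.1 π * ∑ q, μbar.1 q * hellingerSq (Trans p π) (Trans q π) := by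
    intro pexp
    obtain ⟨r₀⟩ := (inferInstance : Nonempty ιR)
    obtain ⟨p₀⟩ := (inferInstance : Nonempty ιP)
    refine le_trans ?_ (le_ciSup (Set.Finite.bddAbove (Set.finite_range _)) r₀)
    refine le_ciInf fun pout => le_trans (hTlb pexp pout r₀ p₀) (le_ciSup (hBddP pexp pout r₀) p₀)
  have hBddF : BddBelow (Set.range fun pexp : ProbDist Pol =>
      ⨆ r : ιR, ⨅ pout : ProbDist Pol, ⨆ p : ιP,
        (∑ π, pout.1 π * (fval Trans Rew p r (πopt p r) - fval Trans Rew p r π))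
          - γ * ∑ π, pexp.1 π * ∑ q, μbar.1 q * hellingerSq (Trans p π) (Trans q π)) :=
    ⟨-(2*γ), Set.forall_mem_range.mpr hFlb⟩
  rw [show (2:ℝ) * rrec (γ/2) Trans Rew μbar = rrec (γ/2) Trans Rew μbar * 2 by ring,
    ← div_le_iff₀ (by norm_num : (0:ℝ) < 2)]
  rw [rrec]
  refine le_ciInf fun pe => ?_
  set Spe : ℝ := ⨆ x : ιP × ιR × Pol,
    |∑ q, pe.2.1 q * (fval Trans Rew x.1 x.2.1 x.2.2 - fval Trans Rew q x.2.1 x.2.2)|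
      - (γ/2) * ∑ q, μbar.1 q * ∑ π, pe.1.1 π * hellingerSq (Trans x.1 π) (Trans q π) with hSpe
  rw [div_le_iff₀ (by norm_num : (0:ℝ) < 2)]
  have hbddx : BddAbove (Set.range fun x : ιP × ιR × Pol =>
      |∑ q, pe.2.1 q * (fval Trans Rew x.1 x.2.1 x.2.2 - fval Trans Rew q x.2.1 x.2.2)|
        - (γ/2) * ∑ q, μbar.1 q * ∑ π, pe.1.1 π * hellingerSq (Trans x.1 π) (Trans q π)) :=
    Set.Finite.bddAbove (Set.finite_range _)
  have hΔ : ∀ (P : ιP) (r : ιR) (π : Pol),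
      |∑ q, pe.2.1 q * (fval Trans Rew P r π - fval Trans Rew q r π)|
        - (γ/2) * ∑ q, μbar.1 q * ∑ π', pe.1.1 π' * hellingerSq (Trans P π') (Trans q π') ≤ Spe :=
    fun P r π => le_ciSup hbddx (P, r, π)
  rw [rfdec]
  refine ciInf_le_of_le hBddF pe.1 ?_
  refine ciSup_le fun r => ?_
  -- choose the best policy under the mixture pe.2
  obtain ⟨πhat, hπhat⟩ := Finite.exists_max fun π : Pol => ∑ q, pe.2.1 q * fval Trans Rew q r π
  have hδ : ∀ i : Pol, (0:ℝ) ≤ if i = πhat then 1 else 0 := fun i => by positivity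
  set pout : ProbDist Pol := ⟨fun π => if π = πhat then 1 else 0, hδ, by simp⟩ with hpout
  refine le_trans (ciInf_le ⟨-(2*γ), Set.forall_mem_range.mpr fun pout' =>
    le_trans (hTlb pe.1 pout' r (Classical.arbitrary ιP))
      (le_ciSup (hBddP pe.1 pout' r) (Classical.arbitrary ιP))⟩ pout) ?_
  refine ciSup_le fun P => ?_
  have hsum : ∑ π, pout.1 π * (fval Trans Rew P r (πopt P r) - fval Trans Rew P r π)
      = fval Trans Rew P r (πopt P r) - fval Trans Rew P r πhat := by
    simp [hpout]
  have hswap : ∑ π, pe.1.1 π * ∑ q, μbar.1 q * hellingerSq (Trans P π) (Trans q π)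
      = ∑ q, μbar.1 q * ∑ π, pe.1.1 π * hellingerSq (Trans P π) (Trans q π) := by
    simp_rw [Finset.mul_sum]
    rw [Finset.sum_comm]
    exact Finset.sum_congr rfl fun q _ => Finset.sum_congr rfl fun π _ => by ring
  have hΔeq : ∀ π : Pol, ∑ q, pe.2.1 q * (fval Trans Rew P r π - fval Trans Rew q r π)
      = fval Trans Rew P r π - ∑ q, pe.2.1 q * fval Trans Rew q r π := by
    intro π
    simp_rw [mul_sub]
    rw [Finset.sum_sub_distrib, ← Finset.sum_mul, pe.2.2.2, one_mul]
  have h1 := hΔ P r (πopt P r)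
  have h2 := hΔ P r πhat
  have h3 := hπhat (πopt P r)
  rw [hΔeq] at h1 h2
  have ha1 : fval Trans Rew P r (πopt P r) - ∑ q, pe.2.1 q * fval Trans Rew q r (πopt P r)
      ≤ |fval Trans Rew P r (πopt P r) - ∑ q, pe.2.1 q * fval Trans Rew q r (πopt P r)| :=
    le_abs_self _
  have ha2 : -(fval Trans Rew P r πhat - ∑ q, pe.2.1 q * fval Trans Rew q r πhat)
      ≤ |fval Trans Rew P r πhat - ∑ q, pe.2.1 q * fval Trans Rew q r πhat| := neg_le_abs _
  rw [hsum, hswap]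
  linarith
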